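/- For all nonnegative integers z₁ ≥ z₂, z₃ and all real t₀ > 0, t₁ > 0: if M(z₁,z₂,z₃) > 0, then η(z₁,z₂,z₃;t₀,t₁) ≥ η(2z₃,z₃,z₃;t₀,t₁); equivalently, 4(z₁²+z₂²−z₁(z₂−3))/3 ≥ 4z₃(z₃+2). Moreover equality is attained: M(2z₃,z₃,z₃) = 1 and the horizontal part of the eigenvalue, η(2z₃,z₃,z₃;t₀,t₁) − 4z₃(z₃+1)/t₁, equals 4z₃/t₀. -/

import Mathlib

/-- The partition function `℘(a₁,a₂)`: the number of triples `(m₁,m₂,m₃) ∈ ℕ₀³` with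
`a₁ = 3(m₁+m₂)` and `a₂ = m₃ − m₁ − 2m₂`. -/
noncomputable def wp (a₁ a₂ : ℤ) : ℕ :=
  Set.ncard {m : ℕ × ℕ × ℕ |
    a₁ = 3 * ((m.1 : ℤ) + (m.2.1 : ℤ)) ∧ a₂ = (m.2.2 : ℤ) - (m.1 : ℤ) - 2 * (m.2.1 : ℤ)}

/-- The branching multiplicity `m(z₁,z₂,z₃)` of the trivial `U•(2)`-representation in the
irreducible `SU(3)×SO(3)`-representation of highest weight `z₁λ₁+z₂λ₂+z₃μ₁`, expressed
as a seven-term alternating sum of partition function values. -/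
noncomputable def branchM (z₁ z₂ z₃ : ℕ) : ℤ :=
  (wp ((z₁ : ℤ) + z₂) (-(z₃ : ℤ) - z₁ - 2) : ℤ)
  + (wp ((z₁ : ℤ) + z₂) ((z₃ : ℤ) - z₂) : ℤ)
  - (wp ((z₁ : ℤ) + z₂) (-(z₃ : ℤ) - z₂ - 1) : ℤ)
  - (wp ((z₁ : ℤ) + z₂) ((z₃ : ℤ) - z₁ - 1) : ℤ)
  + (wp ((z₁ : ℤ) - 2 * z₂ - 3) ((z₂ : ℤ) + 1 - z₃) : ℤ)
  + (wp ((z₁ : ℤ) - 2 * z₂ - 3) ((z₂ : ℤ) - z₁ + z₃) : ℤ)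
  - (wp ((z₁ : ℤ) - 2 * z₂ - 3) ((z₂ : ℤ) + 2 + z₃) : ℤ)

/-- The Laplace eigenvalue `η(z₁,z₂,z₃;t₀,t₁)` of the metric `g_{t₀,t₁}` on the
Aloff–Wallach manifold `W^{1,1}` associated with the representation `ϱ(z₁,z₂,z₃)`. -/
noncomputable def eta (z₁ z₂ z₃ : ℕ) (t₀ t₁ : ℝ) : ℝ :=
  (4 * ((z₁ : ℝ) ^ 2 + (z₂ : ℝ) ^ 2 - (z₁ : ℝ) * ((z₂ : ℝ) - 3)) / 3
      - 4 * (z₃ : ℝ) * ((z₃ : ℝ) + 1)) / t₀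
    + 4 * (z₃ : ℝ) * ((z₃ : ℝ) + 1) / t₁

/-!
Counting the triples gives a closed form for `℘`: it vanishes unless `a₁ = 3k` with `k ≥ 0`,
and then equals `max 0 (min (k + 1) (a₂ + 2k + 1))`. With this, `M(z₁,z₂,z₃)` is a
piecewise linear function of `z`, and a case analysis shows that it vanishes unless `2z₃ ≤ z₁`.
Since `x² - xy + y² ≥ 3x²/4`, the horizontal part `4(z₁² + z₂² - z₁(z₂ - 3))/3` is at least
`z₁² + 4z₁ ≥ 4z₃(z₃ + 2)`, which is its value at `(2z₃, z₃)`.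
-/

lemma wp_eq_zero_of_not_nonneg_and_dvd {a₁ : ℤ} (h : ¬(0 ≤ a₁ ∧ 3 ∣ a₁)) (a₂ : ℤ) :
    wp a₁ a₂ = 0 := by
  rw [wp, ← Set.ncard_empty (ℕ × ℕ × ℕ)]
  congr 1
  rw [Set.eq_empty_iff_forall_notMem]
  rintro ⟨m₁, m₂, m₃⟩ ⟨h₁, -⟩
  exact h ⟨by omega, (m₁ : ℤ) + m₂, h₁⟩

lemma wp_three_mul (k : ℕ) (a₂ : ℤ) :
    (wp (3 * k) a₂ : ℤ) = max 0 (min ((k : ℤ) + 1) (a₂ + 2 * k + 1)) := by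
  have hset : {m : ℕ × ℕ × ℕ |
      (3 * k : ℤ) = 3 * ((m.1 : ℤ) + (m.2.1 : ℤ)) ∧
        a₂ = (m.2.2 : ℤ) - (m.1 : ℤ) - 2 * (m.2.1 : ℤ)}
      = ↑((Finset.Icc ((-a₂ - k).toNat) k).image
          (fun m₂ => (k - m₂, m₂, (a₂ + k + m₂).toNat))) := by
    ext ⟨m₁, m₂, m₃⟩
    simp only [Set.mem_ofPred_eq, Finset.coe_image, Set.mem_image, Finset.mem_coe,
      Finset.mem_Icc, Prod.mk.injEq]
    constructor
    · rintro ⟨h₁, h₂⟩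
      exact ⟨m₂, by omega, by omega, rfl, by omega⟩
    · rintro ⟨m₂, ⟨hlo, hhi⟩, rfl, rfl, rfl⟩
      constructor <;> omega
  have hinj : Function.Injective fun m₂ : ℕ => (k - m₂, m₂, (a₂ + k + m₂).toNat) :=
    fun _ _ h => congrArg (fun m => m.2.1) h
  rw [wp, hset, Set.ncard_coe_finset, Finset.card_image_of_injective _ hinj, Nat.card_Icc]
  omega

lemma wp_eq_ite (a₁ a₂ : ℤ) :
    (wp a₁ a₂ : ℤ) =
      if 0 ≤ a₁ ∧ 3 ∣ a₁ then max 0 (min (a₁ / 3 + 1) (a₂ + 2 * (a₁ / 3) + 1)) else 0 := by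
  split_ifs with h
  · obtain ⟨h₀, c, rfl⟩ := h
    lift c to ℕ using by omega
    rw [wp_three_mul]
    omega
  · rw [wp_eq_zero_of_not_nonneg_and_dvd h, Nat.cast_zero]

lemma two_mul_le_of_branchM_pos {z₁ z₂ z₃ : ℕ} (h : 0 < branchM z₁ z₂ z₃) : 2 * z₃ ≤ z₁ := by
  simp only [branchM, wp_eq_ite] at h
  split_ifs at h <;> omega

lemma branchM_two_mul_self (z : ℕ) : branchM (2 * z) z z = 1 := by
  simp only [branchM, wp_eq_ite]
  split_ifs <;> push_cast <;> omega

lemma eta_two_mul_self (z : ℕ) {t₀ : ℝ} (ht₀ : t₀ ≠ 0) (t₁ : ℝ) :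
    eta (2 * z) z z t₀ t₁ = 4 * (z : ℝ) / t₀ + 4 * (z : ℝ) * ((z : ℝ) + 1) / t₁ := by
  rw [eta]
  push_cast
  congr 1
  field_simp
  ring

lemma four_mul_add_two_le_of_two_mul_le {x z : ℝ} (y : ℝ) (hz : 0 ≤ z) (hzx : 2 * z ≤ x) :
    4 * z * (z + 2) ≤ 4 * (x ^ 2 + y ^ 2 - x * (y - 3)) / 3 :=
  calc 4 * z * (z + 2) ≤ x ^ 2 + 4 * x := by nlinarith
    _ ≤ 4 * (x ^ 2 + y ^ 2 - x * (y - 3)) / 3 := by nlinarith [sq_nonneg (x - 2 * y)]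

theorem eta_ge_eta_of_branchM_pos_general (z₁ z₂ z₃ : ℕ)
    (t₀ t₁ : ℝ) (ht₀ : 0 < t₀) :
    (0 < branchM z₁ z₂ z₃ →
      eta z₁ z₂ z₃ t₀ t₁ ≥ eta (2 * z₃) z₃ z₃ t₀ t₁ ∧
      4 * ((z₁ : ℝ) ^ 2 + (z₂ : ℝ) ^ 2 - (z₁ : ℝ) * ((z₂ : ℝ) - 3)) / 3
        ≥ 4 * (z₃ : ℝ) * ((z₃ : ℝ) + 2)) ∧
    branchM (2 * z₃) z₃ z₃ = 1 ∧
    eta (2 * z₃) z₃ z₃ t₀ t₁ - 4 * (z₃ : ℝ) * ((z₃ : ℝ) + 1) / t₁ = 4 * (z₃ : ℝ) / t₀ := by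
  have hmin := eta_two_mul_self z₃ ht₀.ne' t₁
  refine ⟨fun hpos => ?_, branchM_two_mul_self z₃, by rw [hmin]; ring⟩
  have hz : 2 * (z₃ : ℝ) ≤ z₁ := by exact_mod_cast two_mul_le_of_branchM_pos hpos
  have hq := four_mul_add_two_le_of_two_mul_le (z₂ : ℝ) (Nat.cast_nonneg z₃) hz
  refine ⟨?_, hq⟩
  rw [ge_iff_le, hmin, eta]
  gcongr
  linarith

/-- **First horizontal eigenvalue for a fixed fibre representation.**
For nonnegative integers `z₁ ≥ z₂`, `z₃` and reals `t₀, t₁ > 0`: if `m(z₁,z₂,z₃) > 0`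
then `η(z₁,z₂,z₃;t₀,t₁) ≥ η(2z₃,z₃,z₃;t₀,t₁)`, equivalently
`4(z₁²+z₂²−z₁(z₂−3))/3 ≥ 4z₃(z₃+2)`. Moreover equality is attained:
`m(2z₃,z₃,z₃) = 1`, and the horizontal part
`η(2z₃,z₃,z₃;t₀,t₁) − 4z₃(z₃+1)/t₁` equals `4z₃/t₀`. -/
theorem eta_ge_eta_of_branchM_pos (z₁ z₂ z₃ : ℕ) (hz : z₂ ≤ z₁)
    (t₀ t₁ : ℝ) (ht₀ : 0 < t₀) (ht₁ : 0 < t₁) :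
    (0 < branchM z₁ z₂ z₃ →
      eta z₁ z₂ z₃ t₀ t₁ ≥ eta (2 * z₃) z₃ z₃ t₀ t₁ ∧
      4 * ((z₁ : ℝ) ^ 2 + (z₂ : ℝ) ^ 2 - (z₁ : ℝ) * ((z₂ : ℝ) - 3)) / 3
        ≥ 4 * (z₃ : ℝ) * ((z₃ : ℝ) + 2)) ∧
    branchM (2 * z₃) z₃ z₃ = 1 ∧
    eta (2 * z₃) z₃ z₃ t₀ t₁ - 4 * (z₃ : ℝ) * ((z₃ : ℝ) + 1) / t₁ = 4 * (z₃ : ℝ) / t₀ :=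
  eta_ge_eta_of_branchM_pos_general z₁ z₂ z₃ t₀ t₁ ht₀
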